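/- Let X be an upper triangular block matrix on ℂ^{N₁}⊗ℂ^{N₂} with (i,j) block S_{ij}X_i (S_{ii} = 𝟙, S_{ij} = 0 for i > j), where all S_{ij} (i < j) are normal N₂×N₂ matrices satisfying [S_{kj}, S_{ki}*] = 0 for all k ≤ i ≤ j. Then ρ = X*X is separable on ℂ^{N₁}⊗ℂ^{N₂}. -/

import Mathlib

/-!
Write `S k i = Uₖ Dₖᵢ Uₖᴴ` with `Uₖ` unitary and `Dₖᵢ = diag (dₖᵢ)`: by Fuglede's theorem the
family `(S k i)ᵢ` consists of commuting normal matrices, so their real and imaginary parts form a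
commuting Hermitian family, which is simultaneously unitarily diagonalizable. Then block row
`k` of `X` contributes to `XᴴX` the blocks
`(S k i Yₖ)ᴴ (S k j Yₖ) = Mₖᴴ diag (conj dₖᵢ * dₖⱼ) Mₖ = ∑ₐ conj dₖᵢₐ dₖⱼₐ · mₖₐᴴ mₖₐ`
with `Mₖ = Uₖᴴ Yₖ` and `mₖₐ` its rows, i.e. the sum over `a` of the product terms
`vₖₐ vₖₐᴴ ⊗ mₖₐᴴ mₖₐ` with `vₖₐ = (conj dₖᵢₐ)ᵢ`.
-/

open Matrix Kronecker ComplexOrder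

/-- Separability on ℂ^{N₁}⊗ℂ^{N₂}. -/
def SepBi {N₁ N₂ : ℕ}
    (ρ : Matrix (Fin N₁ × Fin N₂) (Fin N₁ × Fin N₂) ℂ) : Prop :=
  ∃ (n : ℕ) (A : Fin n → Matrix (Fin N₁) (Fin N₁) ℂ)
    (B : Fin n → Matrix (Fin N₂) (Fin N₂) ℂ),
    (∀ i, (A i).PosSemidef) ∧ (∀ i, (B i).PosSemidef) ∧
    ρ = ∑ i, A i ⊗ₖ B i

theorem exists_orthonormalBasis_forall_apply_eq_smul_of_pairwise_commute
    {𝕜 E ι : Type*} [RCLike 𝕜] [NormedAddCommGroup E] [InnerProductSpace 𝕜 E]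
    [FiniteDimensional 𝕜 E] {T : ι → Module.End 𝕜 E}
    (hT : ∀ i, (T i).IsSymmetric) (hC : Pairwise fun i j => Commute (T i) (T j)) :
    ∃ (b : OrthonormalBasis (Fin (Module.finrank 𝕜 E)) 𝕜 E)
      (χ : Fin (Module.finrank 𝕜 E) → ι → 𝕜), ∀ a i, T i (b a) = χ a i • b a := by
  classical
  set V : (ι → 𝕜) → Submodule 𝕜 E := fun χ => ⨅ i, Module.End.eigenspace (T i) (χ i)
  have hV : DirectSum.IsInternal V :=
    LinearMap.IsSymmetric.directSum_isInternal_of_pairwise_commute hT hC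
  -- A subordinate basis needs a finite index type: keep the nonzero joint eigenspaces only.
  have : Fintype {χ // V χ ≠ ⊥} :=
    (WellFoundedGT.finite_ne_bot_of_iSupIndep hV.submodule_iSupIndep).fintype
  have hV' : DirectSum.IsInternal fun χ : {χ // V χ ≠ ⊥} => V χ := by
    rw [DirectSum.isInternal_submodule_iff_iSupIndep_and_iSup_eq_top, iSup_ne_bot_subtype]
    exact ⟨hV.submodule_iSupIndep.comp Subtype.coe_injective, hV.submodule_iSup_eq_top⟩
  have horth := (LinearMap.IsSymmetric.orthogonalFamily_iInf_eigenspaces hT).comp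
    (Subtype.coe_injective (p := fun χ => V χ ≠ ⊥))
  refine ⟨hV'.subordinateOrthonormalBasis rfl horth,
    fun a => (hV'.subordinateOrthonormalBasisIndex rfl a horth).1, fun a i => ?_⟩
  exact Module.End.mem_eigenspace_iff.mp <|
    (Submodule.mem_iInf _).mp (hV'.subordinateOrthonormalBasis_subordinate rfl a horth) i

theorem Matrix.exists_unitary_forall_eq_conj_diagonal_of_isHermitian_of_commute
    {𝕜 n ι : Type*} [RCLike 𝕜] [Fintype n] [DecidableEq n] {T : ι → Matrix n n 𝕜}
    (hT : ∀ i, (T i).IsHermitian) (hC : ∀ i j, Commute (T i) (T j)) :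
    ∃ (U : unitaryGroup n 𝕜) (d : ι → n → 𝕜),
      ∀ i, T i = Unitary.conjStarAlgAut 𝕜 _ U (diagonal (d i)) := by
  obtain ⟨b₀, χ, hb₀⟩ := exists_orthonormalBasis_forall_apply_eq_smul_of_pairwise_commute
    (E := EuclideanSpace 𝕜 n) (T := fun i => toEuclideanLin (T i))
    (fun i => isSymmetric_toEuclideanLin_iff.mpr (hT i))
    fun i j _ => (hC i j).map (toLpLinAlgEquiv 2)
  let e : n ≃ Fin (Module.finrank 𝕜 (EuclideanSpace 𝕜 n)) :=
    Fintype.equivFinOfCardEq finrank_euclideanSpace.symm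
  let b := b₀.reindex e.symm
  have hb : ∀ i a, T i *ᵥ b a = χ (e a) i • b a := fun i a => by
    simpa [b] using congrArg WithLp.ofLp (hb₀ (e a) i)
  let U : unitaryGroup n 𝕜 :=
    ⟨_, (EuclideanSpace.basisFun n 𝕜).toMatrix_orthonormalBasis_mem_unitary b⟩
  have hU : ∀ p a, (U : Matrix n n 𝕜) p a = b a p := fun _ _ => rfl
  refine ⟨U, fun i a => χ (e a) i, fun i => ?_⟩
  have hcol : T i * U = U * diagonal fun a => χ (e a) i := by
    ext p a
    rw [mul_diagonal]
    simpa [mul_apply, hU, mulVec, dotProduct, mul_comm] using congrFun (hb i a) p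
  rw [Unitary.conjStarAlgAut_apply, ← hcol, mul_assoc, Unitary.mul_star_self_of_mem U.2, mul_one]

section ComplexStarModule

open scoped ComplexStarModule

variable {A : Type*} [Ring A] [StarRing A] [Algebra ℂ A] [StarModule ℂ A] {a x : A}

theorem Commute.realPart_right (h : Commute x a) (h' : Commute x (star a)) :
    Commute x (ℜ a : A) := by
  rw [realPart_apply_coe]
  exact (h.add_right h').smul_right _

theorem Commute.imaginaryPart_right (h : Commute x a) (h' : Commute x (star a)) :
    Commute x (ℑ a : A) := by
  rw [imaginaryPart_apply_coe]
  exact ((h.sub_right h').smul_right _).smul_right _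

end ComplexStarModule

open scoped Matrix.Norms.L2Operator ComplexStarModule in
theorem Matrix.exists_unitary_forall_eq_conj_diagonal_of_commute_star
    {n ι : Type*} [Fintype n] [DecidableEq n] {T : ι → Matrix n n ℂ}
    (hC : ∀ i j, Commute (T i) (star (T j))) :
    ∃ (U : unitaryGroup n ℂ) (d : ι → n → ℂ),
      ∀ i, T i = Unitary.conjStarAlgAut ℂ _ U (diagonal (d i)) := by
  -- Fuglede–Putnam, in the C⋆-algebra of matrices with the operator norm.
  have hcomm : ∀ i j, Commute (T i) (T j) := fun i j => by
    have : IsStarNormal (T j) := ⟨(hC j j).symm⟩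
    simpa using this.star.commute_star_right (hC i j)
  let H : ι ⊕ ι → Matrix n n ℂ := Sum.elim (fun i => ℜ (T i)) (fun i => ℑ (T i))
  have hH : ∀ x, (∀ j, Commute x (T j) ∧ Commute x (star (T j))) → ∀ y, Commute x (H y) := by
    rintro x hx (j | j)
    · exact (hx j).1.realPart_right (hx j).2
    · exact (hx j).1.imaginaryPart_right (hx j).2
  have hHH : ∀ y z, Commute (H y) (H z) := fun y => hH _ fun j =>
    ⟨(hH _ (fun i => ⟨hcomm j i, hC j i⟩) y).symm,
      (hH _ (fun i => ⟨(hC i j).symm, (hcomm j i).star_star⟩) y).symm⟩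
  obtain ⟨U, d, hd⟩ := exists_unitary_forall_eq_conj_diagonal_of_isHermitian_of_commute
    (T := H) (by rintro (i | i); exacts [(ℜ (T i)).2, (ℑ (T i)).2]) hHH
  refine ⟨U, fun i => d (.inl i) + Complex.I • d (.inr i), fun i => ?_⟩
  have hsplit : diagonal (d (.inl i) + Complex.I • d (.inr i)) =
      diagonal (d (.inl i)) + Complex.I • diagonal (d (.inr i)) := by
    rw [← diagonal_smul, diagonal_add]; rfl
  rw [hsplit, map_add, map_smul, ← hd, ← hd]
  exact (realPart_add_I_smul_imaginaryPart (T i)).symm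

theorem Matrix.conjTranspose_mul_diagonal_mul_eq_sum_vecMulVec {m n α : Type*} [Fintype m]
    [DecidableEq m] [CommSemiring α] [StarRing α] (M : Matrix m n α) (w : m → α) :
    Mᴴ * diagonal w * M = ∑ a, w a • vecMulVec (star (M a)) (M a) := by
  ext b c
  rw [mul_apply]
  simp only [mul_diagonal, Matrix.sum_apply, smul_apply, vecMulVec_apply,
    conjTranspose_apply, Pi.star_apply, smul_eq_mul]
  exact Finset.sum_congr rfl fun a _ => by ring

theorem sepBi_sum_kronecker {N₁ N₂ : ℕ} {ι : Type*} [Fintype ι]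
    {A : ι → Matrix (Fin N₁) (Fin N₁) ℂ} {B : ι → Matrix (Fin N₂) (Fin N₂) ℂ}
    (hA : ∀ i, (A i).PosSemidef) (hB : ∀ i, (B i).PosSemidef) :
    SepBi (∑ i, A i ⊗ₖ B i) := by
  let e := Fintype.equivFin ι
  exact ⟨_, A ∘ e.symm, B ∘ e.symm, fun _ => hA _, fun _ => hB _,
    (e.symm.sum_comp fun i => A i ⊗ₖ B i).symm⟩

theorem sepBi_conjTranspose_mul_self_of_eq_conj_diagonal {N₁ N₂ : ℕ}
    (S : Fin N₁ → Fin N₁ → Matrix (Fin N₂) (Fin N₂) ℂ)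
    (Y : Fin N₁ → Matrix (Fin N₂) (Fin N₂) ℂ)
    (U : Fin N₁ → unitaryGroup (Fin N₂) ℂ) (d : Fin N₁ → Fin N₁ → Fin N₂ → ℂ)
    (hS : ∀ k i, S k i = Unitary.conjStarAlgAut ℂ _ (U k) (diagonal (d k i))) :
    letI X : Matrix (Fin N₁ × Fin N₂) (Fin N₁ × Fin N₂) ℂ :=
      fun p q => (S p.1 q.1 * Y p.1) p.2 q.2
    SepBi (Xᴴ * X) := by
  set X : Matrix (Fin N₁ × Fin N₂) (Fin N₁ × Fin N₂) ℂ := fun p q => (S p.1 q.1 * Y p.1) p.2 q.2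
  let M k : Matrix (Fin N₂) (Fin N₂) ℂ := star (U k : Matrix (Fin N₂) (Fin N₂) ℂ) * Y k
  have hrow : ∀ k i j, (S k i * Y k)ᴴ * (S k j * Y k) =
      ∑ a, (star (d k i a) * d k j a) • vecMulVec (star (M k a)) (M k a) := fun k i j => by
    have : (S k i)ᴴ * S k j = (U k : Matrix (Fin N₂) (Fin N₂) ℂ) *
        diagonal (star (d k i) * d k j) * star (U k : Matrix (Fin N₂) (Fin N₂) ℂ) := by
      rw [hS, hS, ← star_eq_conjTranspose, ← map_star, ← map_mul, star_eq_conjTranspose,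
        diagonal_conjTranspose, diagonal_mul_diagonal, Unitary.conjStarAlgAut_apply]
      rfl
    rw [← conjTranspose_mul_diagonal_mul_eq_sum_vecMulVec, conjTranspose_mul, conjTranspose_mul,
      mul_assoc, ← mul_assoc (S k i)ᴴ, this]
    simp only [M, star_eq_conjTranspose, conjTranspose_conjTranspose, mul_assoc]
    rfl
  have hsum : Xᴴ * X = ∑ p : Fin N₁ × Fin N₂,
      vecMulVec (star fun i => d p.1 i p.2) (fun i => d p.1 i p.2) ⊗ₖ
        vecMulVec (star (M p.1 p.2)) (M p.1 p.2) := by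
    ext ⟨i, b⟩ ⟨j, c⟩
    rw [mul_apply, Fintype.sum_prod_type, Matrix.sum_apply, Fintype.sum_prod_type]
    refine Finset.sum_congr rfl fun k _ => ?_
    calc _ = ((S k i * Y k)ᴴ * (S k j * Y k)) b c := rfl
      _ = _ := by
        simp only [hrow, Matrix.sum_apply, Matrix.smul_apply, vecMulVec_apply, smul_eq_mul]; rfl
  rw [hsum]
  exact sepBi_sum_kronecker (fun _ => posSemidef_vecMulVec_star_self _)
    (fun _ => posSemidef_vecMulVec_star_self _)

theorem stmt16_general {N₁ N₂ : ℕ}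
    (S : Fin N₁ → Fin N₁ → Matrix (Fin N₂) (Fin N₂) ℂ)
    (Y : Fin N₁ → Matrix (Fin N₂) (Fin N₂) ℂ)
    (hlow : ∀ i j, j < i → S i j = 0)
    (hcomm : ∀ k i j, k ≤ i → i ≤ j →
      S k j * (S k i)ᴴ = (S k i)ᴴ * S k j) :
    letI X : Matrix (Fin N₁ × Fin N₂) (Fin N₁ × Fin N₂) ℂ :=
      fun p q => (S p.1 q.1 * Y p.1) p.2 q.2
    SepBi (Xᴴ * X) := by
  have hstar : ∀ k i j, Commute (S k i) (star (S k j)) := by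
    intro k i j
    rcases lt_or_ge i k with hik | hki
    · simp [hlow k i hik]
    rcases lt_or_ge j k with hjk | hkj
    · simp [hlow k j hjk]
    rcases le_total i j with hij | hji
    · simpa only [star_eq_conjTranspose, conjTranspose_conjTranspose] using
        (Commute.star_star (hcomm k i j hki hij)).symm
    · exact hcomm k j i hkj hji
  choose U d hd using fun k => exists_unitary_forall_eq_conj_diagonal_of_commute_star (hstar k)
  exact sepBi_conjTranspose_mul_self_of_eq_conj_diagonal S Y U d hd

theorem stmt16 {N₁ N₂ : ℕ}
    (S : Fin N₁ → Fin N₁ → Matrix (Fin N₂) (Fin N₂) ℂ)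
    (Y : Fin N₁ → Matrix (Fin N₂) (Fin N₂) ℂ)
    (hdiag : ∀ i, S i i = 1)
    (hlow : ∀ i j, j < i → S i j = 0)
    (hnormal : ∀ i j, i < j → S i j * (S i j)ᴴ = (S i j)ᴴ * S i j)
    (hcomm : ∀ k i j, k ≤ i → i ≤ j →
      S k j * (S k i)ᴴ = (S k i)ᴴ * S k j) :
    letI X : Matrix (Fin N₁ × Fin N₂) (Fin N₁ × Fin N₂) ℂ :=
      fun p q => (S p.1 q.1 * Y p.1) p.2 q.2
    SepBi (Xᴴ * X) :=
  stmt16_general S Y hlow hcomm
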